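/- arXiv:2309.15364 — 3 statements merged into one kernel-verified Lean document; each statement's English description precedes it below -/
import Mathlib

section
/- Let F = ℚ(q,a,b,c,x) be the field of rational functions over ℚ in the indeterminates q, a, b, c, x. For every N ∈ ℕ and 0 ≤ r ≤ N define C_{N,r} := q^{r(r+1)/2} (−b/c)^r · (q;q)_N/((q;q)_r (q;q)_{N−r}) · (a/b;q)_r (q^{r+1}a/c;q)_{N−r} / (bq/c;q)_N (all displayed denominators are nonzero elements of F). Then for every N ∈ ℕ one has the expansion (a x;q)_N = Σ_{r=0}^{N} C_{N,r} · (b x;q)_{N−r} · (c q^{−r} x;q)_r. -/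
open Finset

/-- The `q`-shifted factorial `(a;q)_n = ∏_{i=0}^{n-1} (1 - a q^i)`. -/
noncomputable def qPoch {F : Type*} [Field F] (q a : F) (n : ℕ) : F :=
  ∏ i ∈ Finset.range n, (1 - a * q ^ i)

/-- The field `F = ℚ(q,a,b,c,x)` of rational functions over `ℚ` in five indeterminates. -/
noncomputable abbrev F0 : Type := FractionRing (MvPolynomial (Fin 5) ℚ)

variable {F : Type*} [Field F]

lemma qPoch_zero (q z : F) : qPoch q z 0 = 1 := by simp [qPoch]

lemma qPoch_succ (q z : F) (n : ℕ) : qPoch q z (n+1) = qPoch q z n * (1 - z * q ^ n) :=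
  Finset.prod_range_succ _ _

lemma qPoch_succ' (q z : F) (n : ℕ) : qPoch q z (n+1) = (1 - z) * qPoch q (z*q) n := by
  rw [qPoch, Finset.prod_range_succ', qPoch]
  simp only [pow_zero, mul_one]
  rw [mul_comm]
  congr 1
  exact Finset.prod_congr rfl fun i _ => by ring

lemma qPoch_ne_zero (q z : F) (n : ℕ) (h : ∀ i, 1 - z * q ^ i ≠ 0) : qPoch q z n ≠ 0 :=
  Finset.prod_ne_zero_iff.mpr fun i _ => h i

noncomputable def Cc (q a b c : F) (N r : ℕ) : F :=
  q ^ (r * (r + 1) / 2) * (-(b / c)) ^ r *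
    (qPoch q q N / (qPoch q q r * qPoch q q (N - r))) *
    (qPoch q (a / b) r * qPoch q (q ^ (r + 1) * a / c) (N - r) / qPoch q (b * q / c) N)

noncomputable def AA (q a b c : F) (N r : ℕ) : F :=
  (a * q ^ (N + r + 1) - c) / (b * q ^ (N + 1) - c)

noncomputable def BB (q a b c : F) (N r : ℕ) : F :=
  (b * q ^ (N + 1) - a * q ^ (N + r + 1)) / (b * q ^ (N + 1) - c)

lemma half_succ (s : ℕ) : (s+1) * (s+1+1) / 2 = s * (s+1) / 2 + (s+1) := by
  obtain ⟨k, hk⟩ := Nat.even_mul_succ_self s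
  have h2 : (s+1)*(s+1+1) = s*(s+1) + 2*(s+1) := by ring
  omega

lemma helper2 {n1 d1 n2 d2 na d : F} (h1 : d1 ≠ 0) (h2 : d2 ≠ 0) (hd : d ≠ 0)
    (key : n1 * (d2 * d) = n2 * na * d1) : n1 / d1 = n2 / d2 * (na / d) := by
  rw [div_mul_div_comm, div_eq_div_iff h1 (mul_ne_zero h2 hd)]
  linear_combination key

lemma helper3 {n1 d1 n2 d2 na n3 d3 nb d : F} (h1 : d1 ≠ 0) (h2 : d2 ≠ 0) (h3 : d3 ≠ 0)
    (hd : d ≠ 0)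
    (key : n1 * (d2 * d3 * d) = n2 * na * (d1 * d3) + n3 * nb * (d1 * d2)) :
    n1 / d1 = n2 / d2 * (na / d) + n3 / d3 * (nb / d) := by
  rw [div_mul_div_comm, div_mul_div_comm,
      div_add_div _ _ (mul_ne_zero h2 hd) (mul_ne_zero h3 hd),
      div_eq_div_iff h1 (mul_ne_zero (mul_ne_zero h2 hd) (mul_ne_zero h3 hd))]
  linear_combination d * key

set_option linter.unusedSectionVars false
set_option linter.unusedVariables false

section
variable (q a b c x : F) (hq0 : q ≠ 0) (hb0 : b ≠ 0) (hc0 : c ≠ 0)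
  (h1 : ∀ n : ℕ, (1:F) - q * q ^ n ≠ 0)
  (hD : ∀ n : ℕ, b * q ^ (n+1) - c ≠ 0)

include hq0 hb0 hc0 h1 hD

lemma hPq (n : ℕ) : qPoch q q n ≠ 0 := qPoch_ne_zero _ _ _ fun i => h1 i

lemma hfbc (i : ℕ) : (1:F) - b * q / c * q ^ i ≠ 0 := by
  intro h
  apply hD i
  have hc' : c * (1 - b * q / c * q ^ i) = c - b * q ^ (i+1) := by
    field_simp
    ring
  rw [h, mul_zero] at hc'
  linear_combination hc'

lemma hPbc (n : ℕ) : qPoch q (b * q / c) n ≠ 0 :=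
  qPoch_ne_zero _ _ _ fun i => hfbc q b c hq0 hb0 hc0 h1 hD i

lemma CcEq (a : F) (N r : ℕ) :
    Cc q a b c N r =
      (q ^ (r * (r + 1) / 2) * (-b) ^ r * qPoch q q N * qPoch q (a/b) r *
        qPoch q (q ^ (r+1) * a / c) (N - r)) /
      (c ^ r * qPoch q q r * qPoch q q (N - r) * qPoch q (b*q/c) N) := by
  have n1 := hPq q b c hq0 hb0 hc0 h1 hD r
  have n2 := hPq q b c hq0 hb0 hc0 h1 hD (N - r)
  have n3 := hPbc q b c hq0 hb0 hc0 h1 hD N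
  rw [Cc, show -(b/c) = (-b)/c from by ring, div_pow]
  set p := qPoch q q N
  set p1 := qPoch q q r
  set p2 := qPoch q q (N - r)
  set pab := qPoch q (a/b) r
  set pac := qPoch q (q ^ (r+1) * a / c) (N - r)
  set pbc := qPoch q (b*q/c) N
  clear_value p p1 p2 pab pac pbc
  have hcr : (c:F) ^ r ≠ 0 := pow_ne_zero _ hc0
  field_simp
end

section
variable (q a b c x : F) (hq0 : q ≠ 0) (hb0 : b ≠ 0) (hc0 : c ≠ 0)
  (h1 : ∀ n : ℕ, (1:F) - q * q ^ n ≠ 0)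
  (hD : ∀ n : ℕ, b * q ^ (n+1) - c ≠ 0)

include hq0 hb0 hc0 h1 hD

set_option maxHeartbeats 1600000 in
lemma coeff_int (a : F) (s m : ℕ) :
    Cc q a b c (s+m+2) (s+1)
      = Cc q a b c (s+m+1) (s+1) * AA q a b c (s+m+1) (s+1)
      + Cc q a b c (s+m+1) s * BB q a b c (s+m+1) s := by
  have n1 := hPq q b c hq0 hb0 hc0 h1 hD s
  have n2 := hPq q b c hq0 hb0 hc0 h1 hD m
  have n3 := hPbc q b c hq0 hb0 hc0 h1 hD (s+m+1)
  have n4 := h1 s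
  have n5 := h1 m
  have n7 := hD (s+m+1)
  have n8 := hfbc q b c hq0 hb0 hc0 h1 hD (s+m+1)
  rw [CcEq q b c hq0 hb0 hc0 h1 hD a (s+m+2) (s+1),
      CcEq q b c hq0 hb0 hc0 h1 hD a (s+m+1) (s+1),
      CcEq q b c hq0 hb0 hc0 h1 hD a (s+m+1) s, AA, BB]
  rw [show s + m + 2 - (s + 1) = m+1 from by omega,
      show s + m + 1 - (s + 1) = m from by omega,
      show s + m + 1 - s = m+1 from by omega, half_succ s]
  rw [show s+m+2 = (s+m+1)+1 from rfl, qPoch_succ q q (s+m+1),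
      qPoch_succ q q s, qPoch_succ q q m,
      qPoch_succ q (a/b) s,
      qPoch_succ q (q ^ (s+1+1) * a / c) m,
      qPoch_succ' q (q ^ (s+1) * a / c) m,
      show q ^ (s+1) * a / c * q = q ^ (s+1+1) * a / c by ring,
      qPoch_succ q (b*q/c) (s+m+1),
      pow_add q (s*(s+1)/2) (s+1), pow_succ (-b) s, pow_succ c s]
  set PQ := qPoch q q (s+m+1)
  set P1 := qPoch q q s
  set P2 := qPoch q q m
  set Pab := qPoch q (a/b) s
  set Pac := qPoch q (q ^ (s+1+1) * a / c) m
  set Pbc := qPoch q (b*q/c) (s+m+1)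
  set w := q ^ (s*(s+1)/2)
  set vb := (-b) ^ s
  have nvc : (c:F) ^ s ≠ 0 := pow_ne_zero _ hc0
  set vc := c ^ s
  clear_value PQ P1 P2 Pab Pac Pbc w vb vc
  refine helper3 ?_ ?_ ?_ ?_ ?_
  · repeat first | assumption | exact one_ne_zero | apply mul_ne_zero
  · repeat first | assumption | exact one_ne_zero | apply mul_ne_zero
  · repeat first | assumption | exact one_ne_zero | apply mul_ne_zero
  · exact n7
  · field_simp
    ring

lemma coeff_b0 (a : F) (N : ℕ) :
    Cc q a b c (N+1) 0 = Cc q a b c N 0 * AA q a b c N 0 := by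
  have n1 := hPq q b c hq0 hb0 hc0 h1 hD N
  have n3 := hPbc q b c hq0 hb0 hc0 h1 hD N
  have n6 := h1 N
  have n7 := hD N
  have n8 := hfbc q b c hq0 hb0 hc0 h1 hD N
  rw [CcEq q b c hq0 hb0 hc0 h1 hD a (N+1) 0, CcEq q b c hq0 hb0 hc0 h1 hD a N 0, AA]
  simp only [Nat.sub_zero, qPoch_zero, pow_zero]
  rw [qPoch_succ q (q ^ (0+1) * a / c) N, qPoch_succ q (b*q/c) N, qPoch_succ q q N]
  set PQ := qPoch q q N
  set Pac := qPoch q (q ^ (0+1) * a / c) N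
  set Pbc := qPoch q (b*q/c) N
  clear_value PQ Pac Pbc
  refine helper2 ?_ ?_ ?_ ?_
  · repeat first | assumption | exact one_ne_zero | apply mul_ne_zero
  · repeat first | assumption | exact one_ne_zero | apply mul_ne_zero
  · exact n7
  · field_simp
    ring

lemma coeff_bt (a : F) (N : ℕ) :
    Cc q a b c (N+1) (N+1) = Cc q a b c N N * BB q a b c N N := by
  have n1 := hPq q b c hq0 hb0 hc0 h1 hD N
  have n3 := hPbc q b c hq0 hb0 hc0 h1 hD N
  have n6 := h1 N
  have n7 := hD N
  have n8 := hfbc q b c hq0 hb0 hc0 h1 hD N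
  rw [CcEq q b c hq0 hb0 hc0 h1 hD a (N+1) (N+1), CcEq q b c hq0 hb0 hc0 h1 hD a N N, BB]
  simp only [Nat.sub_self, qPoch_zero]
  rw [half_succ N, qPoch_succ q q N, qPoch_succ q (a/b) N, qPoch_succ q (b*q/c) N,
      pow_add q (N*(N+1)/2) (N+1), pow_succ (-b) N, pow_succ c N]
  set PQ := qPoch q q N
  set Pab := qPoch q (a/b) N
  set Pbc := qPoch q (b*q/c) N
  set w := q ^ (N*(N+1)/2)
  set vb := (-b) ^ N
  have nvc : (c:F) ^ N ≠ 0 := pow_ne_zero _ hc0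
  set vc := c ^ N
  clear_value PQ Pab Pbc w vb vc
  refine helper2 ?_ ?_ ?_ ?_
  · repeat first | assumption | exact one_ne_zero | apply mul_ne_zero
  · repeat first | assumption | exact one_ne_zero | apply mul_ne_zero
  · exact n7
  · field_simp
    ring
end

section
variable (q a b c x : F) (hq0 : q ≠ 0) (hb0 : b ≠ 0) (hc0 : c ≠ 0)
  (h1 : ∀ n : ℕ, (1:F) - q * q ^ n ≠ 0)
  (hD : ∀ n : ℕ, b * q ^ (n+1) - c ≠ 0)

include hq0 hD in
lemma step (r m : ℕ) :
    (1 - a * x * q ^ (r + m)) * (qPoch q (b*x) m * qPoch q (c * q ^ (-(r:ℤ)) * x) r)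
  = AA q a b c (r+m) r * (qPoch q (b*x) (m+1) * qPoch q (c * q ^ (-(r:ℤ)) * x) r)
  + BB q a b c (r+m) r * (qPoch q (b*x) m * qPoch q (c * q ^ (-((r:ℤ)+1)) * x) (r+1)) := by
  have hbase : c * q ^ (-((r:ℤ)+1)) * x * q = c * q ^ (-(r:ℤ)) * x := by
    rw [show (-((r:ℤ)+1)) = -(r:ℤ) + (-1) by ring, zpow_add₀ hq0]
    field_simp
  rw [qPoch_succ q (b*x) m, qPoch_succ' q _ (r), hbase]
  have key : (1 - a * x * q ^ (r + m))
      = AA q a b c (r+m) r * (1 - b * x * q ^ m)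
      + BB q a b c (r+m) r * (1 - c * q ^ (-((r:ℤ)+1)) * x) := by
    rw [AA, BB, show (-((r:ℤ)+1)) = -((r+1 : ℕ) : ℤ) by push_cast; ring, zpow_neg, zpow_natCast]
    have hD' := hD (r + m)
    have hp : (q:F) ^ (r+1) ≠ 0 := pow_ne_zero _ hq0
    field_simp
    ring
  linear_combination (qPoch q (b*x) m * qPoch q (c * q ^ (-(r:ℤ)) * x) r) * key

include hq0 hb0 hc0 h1 hD in
theorem genExpansion : ∀ N : ℕ,
    qPoch q (a*x) N = ∑ r ∈ Finset.range (N+1),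
      Cc q a b c N r * qPoch q (b*x) (N-r) * qPoch q (c * q ^ (-(r:ℤ)) * x) r := by
  intro N
  induction N with
  | zero => simp [qPoch_zero, Cc]
  | succ N ih =>
    rw [qPoch_succ, ih, Finset.sum_mul]
    have hstep : ∀ r ∈ Finset.range (N+1),
        Cc q a b c N r * qPoch q (b*x) (N-r) * qPoch q (c * q ^ (-(r:ℤ)) * x) r * (1 - a*x*q^N)
        = Cc q a b c N r * AA q a b c N r * qPoch q (b*x) (N+1-r) * qPoch q (c * q ^ (-(r:ℤ)) * x) r
        + Cc q a b c N r * BB q a b c N r * qPoch q (b*x) (N-r) * qPoch q (c * q ^ (-((r:ℤ)+1)) * x) (r+1) := by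
      intro r hr
      have hr' : r ≤ N := Nat.lt_succ_iff.mp (Finset.mem_range.mp hr)
      obtain ⟨m, rfl⟩ : ∃ m, N = r + m := ⟨N - r, by omega⟩
      rw [show r + m - r = m from by omega, show r + m + 1 - r = m + 1 from by omega]
      have st := step q a b c x hq0 hD r m
      linear_combination (Cc q a b c (r+m) r) * st
    rw [Finset.sum_congr rfl hstep, Finset.sum_add_distrib]
    rw [Finset.sum_range_succ'
      (fun r => Cc q a b c (N+1) r * qPoch q (b*x) (N+1-r) * qPoch q (c * q ^ (-(r:ℤ)) * x) r) (N+1)]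
    rw [Finset.sum_range_succ
      (fun r => Cc q a b c (N+1) (r+1) * qPoch q (b*x) (N+1-(r+1)) * qPoch q (c * q ^ (-((r+1:ℕ):ℤ)) * x) (r+1)) N]
    rw [Finset.sum_range_succ'
      (fun r => Cc q a b c N r * AA q a b c N r * qPoch q (b*x) (N+1-r) * qPoch q (c * q ^ (-(r:ℤ)) * x) r) N]
    rw [Finset.sum_range_succ
      (fun r => Cc q a b c N r * BB q a b c N r * qPoch q (b*x) (N-r) * qPoch q (c * q ^ (-((r:ℤ)+1)) * x) (r+1)) N]
    have hb0' : Cc q a b c (N+1) 0 * qPoch q (b*x) (N+1-0) * qPoch q (c * q ^ (-((0:ℕ):ℤ)) * x) 0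
        = Cc q a b c N 0 * AA q a b c N 0 * qPoch q (b*x) (N+1-0) * qPoch q (c * q ^ (-((0:ℕ):ℤ)) * x) 0 := by
      have := coeff_b0 q b c hq0 hb0 hc0 h1 hD a N
      linear_combination (qPoch q (b*x) (N+1-0) * qPoch q (c * q ^ (-((0:ℕ):ℤ)) * x) 0) * this
    have htop : Cc q a b c (N+1) (N+1) * qPoch q (b*x) (N+1-(N+1)) * qPoch q (c * q ^ (-((N+1:ℕ):ℤ)) * x) (N+1)
        = Cc q a b c N N * BB q a b c N N * qPoch q (b*x) (N-N) * qPoch q (c * q ^ (-((N:ℤ)+1)) * x) (N+1) := by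
      have hcast : (-((N+1:ℕ):ℤ)) = -((N:ℤ)+1) := by push_cast; ring
      rw [hcast]
      simp only [Nat.sub_self, Nat.add_sub_cancel_left]
      have := coeff_bt q b c hq0 hb0 hc0 h1 hD a N
      linear_combination (qPoch q (b*x) 0 * qPoch q (c * q ^ (-((N:ℤ)+1)) * x) (N+1)) * this
    have hmid : ∀ r ∈ Finset.range N,
        Cc q a b c (N+1) (r+1) * qPoch q (b*x) (N+1-(r+1)) * qPoch q (c * q ^ (-((r+1:ℕ):ℤ)) * x) (r+1)
        = Cc q a b c N (r+1) * AA q a b c N (r+1) * qPoch q (b*x) (N+1-(r+1)) * qPoch q (c * q ^ (-((r+1:ℕ):ℤ)) * x) (r+1)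
        + Cc q a b c N r * BB q a b c N r * qPoch q (b*x) (N-r) * qPoch q (c * q ^ (-((r:ℤ)+1)) * x) (r+1) := by
      intro r hr
      have hrN : r < N := Finset.mem_range.mp hr
      obtain ⟨m, rfl⟩ : ∃ m, N = r + m + 1 := ⟨N - r - 1, by omega⟩
      have hcast : (-((r+1:ℕ):ℤ)) = -((r:ℤ)+1) := by push_cast; ring
      rw [hcast, show r + m + 1 + 1 - (r+1) = m + 1 from by omega,
          show r + m + 1 - r = m + 1 from by omega,
          show r + m + 1 + 1 = r + m + 2 from by omega]
      have := coeff_int q b c hq0 hb0 hc0 h1 hD a r m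
      linear_combination (qPoch q (b*x) (m+1) * qPoch q (c * q ^ (-((r:ℤ)+1)) * x) (r+1)) * this
    rw [Finset.sum_congr rfl hmid, Finset.sum_add_distrib, hb0', htop]
    ring
end

/-- the generalized `q`-binomial expansion
`(ax;q)_N = Σ_{r=0}^{N} C_{N,r} (bx;q)_{N-r} (c q^{-r} x;q)_r` with
`C_{N,r} = q^{r(r+1)/2} (-b/c)^r (q;q)_N/((q;q)_r (q;q)_{N-r}) ·
 (a/b;q)_r (q^{r+1}a/c;q)_{N-r} / (bq/c;q)_N`. -/
theorem statement0
    (q a b c x : F0)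
    (hq : q = algebraMap (MvPolynomial (Fin 5) ℚ) F0 (MvPolynomial.X 0))
    (ha : a = algebraMap (MvPolynomial (Fin 5) ℚ) F0 (MvPolynomial.X 1))
    (hb : b = algebraMap (MvPolynomial (Fin 5) ℚ) F0 (MvPolynomial.X 2))
    (hc : c = algebraMap (MvPolynomial (Fin 5) ℚ) F0 (MvPolynomial.X 3))
    (hx : x = algebraMap (MvPolynomial (Fin 5) ℚ) F0 (MvPolynomial.X 4)) :
    ∀ N : ℕ, qPoch q (a * x) N =
      ∑ r ∈ Finset.range (N + 1),
        (q ^ (r * (r + 1) / 2) * (-(b / c)) ^ r *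
            (qPoch q q N / (qPoch q q r * qPoch q q (N - r))) *
            (qPoch q (a / b) r * qPoch q (q ^ (r + 1) * a / c) (N - r) /
              qPoch q (b * q / c) N)) *
          qPoch q (b * x) (N - r) * qPoch q (c * q ^ (-(r : ℤ)) * x) r := by
  have inj : Function.Injective (algebraMap (MvPolynomial (Fin 5) ℚ) F0) :=
    IsFractionRing.injective _ _
  have key : ∀ p : MvPolynomial (Fin 5) ℚ, ∀ f : Fin 5 → ℚ,
      MvPolynomial.eval f p ≠ 0 → algebraMap (MvPolynomial (Fin 5) ℚ) F0 p ≠ 0 := by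
    intro p f hf hzero
    apply hf
    have hp : p = 0 := inj (by rw [hzero, map_zero])
    rw [hp, map_zero]
  have hq0 : q ≠ 0 := by
    rw [hq]; exact key _ (fun _ => 1) (by simp)
  have hb0 : b ≠ 0 := by
    rw [hb]; exact key _ (fun _ => 1) (by simp)
  have hc0 : c ≠ 0 := by
    rw [hc]; exact key _ (fun _ => 1) (by simp)
  have h1 : ∀ n : ℕ, (1:F0) - q * q ^ n ≠ 0 := by
    intro n
    rw [hq, ← map_pow, ← map_mul, ← map_one (algebraMap (MvPolynomial (Fin 5) ℚ) F0), ← map_sub]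
    apply key _ (fun _ => 2)
    have h2 : (1:ℚ) ≤ 2^n := one_le_pow₀ one_le_two
    simp only [map_sub, map_one, map_mul, map_pow, MvPolynomial.eval_X]
    have hlt : (1:ℚ) < 2 * 2^n := by nlinarith
    exact sub_ne_zero.mpr (ne_of_lt hlt)
  have hD : ∀ n : ℕ, b * q ^ (n+1) - c ≠ 0 := by
    intro n
    rw [hb, hq, hc, ← map_pow, ← map_mul, ← map_sub]
    apply key _ (fun i => if i = 3 then 2 else 1)
    simp only [map_sub, map_mul, map_pow, MvPolynomial.eval_X]
    norm_num [show (2:Fin 5) ≠ 3 from by decide, show (0:Fin 5) ≠ 3 from by decide]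
  intro N
  have := genExpansion q a b c x hq0 hb0 hc0 h1 hD N
  simpa only [Cc] using this
end

section
/- Let A be a commutative ring and let U, Q, K ∈ A be invertible. For integers a, b define f(a,b) := (U Q^{a} K^{b})^{−1} − U Q^{a} K^{b}. Let λ and μ be partitions with conjugate parts λ^∨_j and μ^∨_i (so λ^∨_j is the length of the j-th column of λ, zero for large j), and let n ≥ 1 and 0 ≤ k ≤ n−1 be integers. For an integer x write res_n(x) for the residue of x modulo n in {0,…,n−1} and ⌊·⌋ for the integer floor. Then the following two elements of A are equal. LHS := ∏_{1 ≤ i ≤ j} ∏_{ℓ=0,…,λ^∨_j−λ^∨_{j+1}−1 with λ^∨_{j+1}−μ^∨_i+ℓ ≡ k (mod n)} f(j−i, λ^∨_{j+1}−μ^∨_i+ℓ) · ∏_{1 ≤ i ≤ j} ∏_{ℓ=0,…,μ^∨_j−μ^∨_{j+1}−1 with λ^∨_i−μ^∨_j+ℓ ≡ k (mod n)} f(i−j−1, λ^∨_i−μ^∨_j+ℓ). RHS := ∏_{1 ≤ i ≤ j} ∏_{r=0}^{M₁(i,j)−1} f(j−i, E₁(i,j) + n r) · ∏_{1 ≤ i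 ≤ j} ∏_{r=0}^{M₂(i,j)−1} f(i−j−1, E₂(i,j) + n r), where E₁(i,j) := k + n⌊(λ^∨_{j+1}+n−1−k−res_n(μ^∨_i))/n⌋ − n⌊μ^∨_i/n⌋, M₁(i,j) := ⌊(λ^∨_j+n−1−k−res_n(μ^∨_i))/n⌋ − ⌊(λ^∨_{j+1}+n−1−k−res_n(μ^∨_i))/n⌋, E₂(i,j) := k + n⌊(λ^∨_i+n−1−k−res_n(μ^∨_j))/n⌋ − n⌊μ^∨_j/n⌋, and M₂(i,j) := ⌊(μ^∨_j+k+res_n(−λ^∨_i))/n⌋ − ⌊(μ^∨_{j+1}+k+res_n(−λ^∨_i))/n⌋. (All four products have only finitely many factors different from 1, since λ^∨ and μ^∨ are eventually zero.) -/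
open Finset

/-- `f(a,b) = (U Q^a K^b)⁻¹ − U Q^a K^b`, where `U, Q, K` are invertible. -/
noncomputable def fFac {A : Type*} [CommRing A] (U Q K : Aˣ) (a b : ℤ) : A :=
  (((U * Q ^ a * K ^ b)⁻¹ : Aˣ) : A) - ((U * Q ^ a * K ^ b : Aˣ) : A)

/-- `res_n(x)`: the residue of `x` modulo `n` in `{0,…,n-1}` (for `n ≥ 1`). -/
def resM (n : ℕ) (x : ℤ) : ℤ := x % (n : ℤ)

/-- `E₁(i,j) = k + n⌊(λ^∨_{j+1}+n−1−k−res_n(μ^∨_i))/n⌋ − n⌊μ^∨_i/n⌋`. -/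
def E1 (n k : ℕ) (lam mu : ℕ → ℕ) (i j : ℕ) : ℤ :=
  (k : ℤ) + n * Int.fdiv ((lam (j + 1) : ℤ) + n - 1 - k - resM n (mu i)) n -
    n * Int.fdiv (mu i : ℤ) n

/-- `M₁(i,j) = ⌊(λ^∨_j+n−1−k−res_n(μ^∨_i))/n⌋ − ⌊(λ^∨_{j+1}+n−1−k−res_n(μ^∨_i))/n⌋`. -/
def M1 (n k : ℕ) (lam mu : ℕ → ℕ) (i j : ℕ) : ℤ :=
  Int.fdiv ((lam j : ℤ) + n - 1 - k - resM n (mu i)) n -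
    Int.fdiv ((lam (j + 1) : ℤ) + n - 1 - k - resM n (mu i)) n

/-- `E₂(i,j) = k + n⌊(λ^∨_i+n−1−k−res_n(μ^∨_j))/n⌋ − n⌊μ^∨_j/n⌋`. -/
def E2 (n k : ℕ) (lam mu : ℕ → ℕ) (i j : ℕ) : ℤ :=
  (k : ℤ) + n * Int.fdiv ((lam i : ℤ) + n - 1 - k - resM n (mu j)) n -
    n * Int.fdiv (mu j : ℤ) n

/-- `M₂(i,j) = ⌊(μ^∨_j+k+res_n(−λ^∨_i))/n⌋ − ⌊(μ^∨_{j+1}+k+res_n(−λ^∨_i))/n⌋`. -/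
def M2 (n k : ℕ) (lam mu : ℕ → ℕ) (i j : ℕ) : ℤ :=
  Int.fdiv ((mu j : ℤ) + k + resM n (-(lam i : ℤ))) n -
    Int.fdiv ((mu (j + 1) : ℤ) + k + resM n (-(lam i : ℤ))) n

private lemma ediv_sub_mul' (n x d : ℤ) (hn : 0 < n) : (x - n * d) / n = x / n - d := by
  have h := Int.add_mul_ediv_left (x - n * d) d hn.ne'
  have h2 : x - n * d + n * d = x := by ring
  rw [h2] at h
  linarith

private lemma ediv_nsub' (n w : ℤ) (hn : 0 < n) : (n - 1 - w) / n = -(w / n) := by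
  have h1 : n * (w / n) + w % n = w := Int.mul_ediv_add_emod w n
  have h2 : 0 ≤ w % n := Int.emod_nonneg w hn.ne'
  have h3 : w % n < n := Int.emod_lt_of_pos w hn
  have h4 : n - 1 - w = (n - 1 - w % n) + n * (-(w / n)) := by linarith
  rw [h4, Int.add_mul_ediv_left _ _ hn.ne',
    Int.ediv_eq_zero_of_lt (by omega) (by omega), zero_add]

private lemma key {A : Type*} [CommMonoid A] (g : ℤ → A) (n k c : ℤ) (hn : 0 < n)
    (hk0 : 0 ≤ k) (hkn : k < n) (L : ℕ) :
    ∏ ℓ ∈ (Finset.range L).filter (fun ℓ : ℕ => (c + (ℓ : ℤ)) % n = k), g (c + (ℓ : ℤ))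
    = ∏ r ∈ Finset.range ((((c + L) - k + n - 1) / n - (c - k + n - 1) / n)).toNat,
        g (k + n * ((c - k + n - 1) / n) + n * (r : ℤ)) := by
  set q1 : ℤ := (c - k + n - 1) / n with hq1
  set q2 : ℤ := ((c + L) - k + n - 1) / n with hq2
  have e1 : n * q1 + (c - k + n - 1) % n = c - k + n - 1 := Int.mul_ediv_add_emod _ n
  have e2 : n * q2 + ((c + L) - k + n - 1) % n = (c + L) - k + n - 1 := Int.mul_ediv_add_emod _ n
  have s1a : 0 ≤ (c - k + n - 1) % n := Int.emod_nonneg _ hn.ne'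
  have s1b : (c - k + n - 1) % n < n := Int.emod_lt_of_pos _ hn
  have s2a : 0 ≤ ((c + L) - k + n - 1) % n := Int.emod_nonneg _ hn.ne'
  have s2b : ((c + L) - k + n - 1) % n < n := Int.emod_lt_of_pos _ hn
  refine Finset.prod_bij' (fun ℓ _ => ((c + (ℓ : ℤ) - k) / n - q1).toNat)
    (fun r _ => (k + n * (q1 + (r : ℤ)) - c).toNat) ?_ ?_ ?_ ?_ ?_
  · -- hi : maps into range N.toNat
    intro ℓ hℓ
    simp only [Finset.mem_filter, Finset.mem_range] at hℓ ⊢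
    obtain ⟨hL, hmod⟩ := hℓ
    have hdvd : (c + (ℓ : ℤ) - k) % n = 0 := by
      rw [Int.sub_emod, hmod, Int.emod_eq_of_lt hk0 hkn, sub_self, Int.zero_emod]
    have hq : n * ((c + (ℓ : ℤ) - k) / n) = c + (ℓ : ℤ) - k := by
      have := Int.mul_ediv_add_emod (c + (ℓ : ℤ) - k) n; omega
    set qℓ : ℤ := (c + (ℓ : ℤ) - k) / n with hqℓ
    have hge : q1 ≤ qℓ := by
      by_contra hcon
      push_neg at hcon
      have h5 := mul_le_mul_of_nonneg_left (Int.add_one_le_of_lt hcon) hn.le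
      have h6 : n * (qℓ + 1) = n * qℓ + n := by ring
      omega
    have hlt : qℓ < q2 := by
      by_contra hcon
      push_neg at hcon
      have h5 := mul_le_mul_of_nonneg_left hcon hn.le
      omega
    omega
  · -- hj : maps into filter
    intro r hr
    simp only [Finset.mem_range] at hr
    have hrN : (r : ℤ) < q2 - q1 := by omega
    have hA : n * (q1 + (r : ℤ)) = n * q1 + n * (r : ℤ) := by ring
    have hnr : 0 ≤ n * (r : ℤ) := mul_nonneg hn.le (Int.ofNat_nonneg r)
    have hub := mul_le_mul_of_nonneg_left (show q1 + (r : ℤ) ≤ q2 - 1 by omega) hn.le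
    have hB : n * (q2 - 1) = n * q2 - n := by ring
    simp only [Finset.mem_filter, Finset.mem_range]
    refine ⟨by omega, ?_⟩
    have hcℓ : c + (((k + n * (q1 + (r : ℤ)) - c).toNat : ℤ)) = k + n * (q1 + (r : ℤ)) := by
      omega
    rw [hcℓ, Int.add_mul_emod_self_left, Int.emod_eq_of_lt hk0 hkn]
  · -- left_inv
    intro ℓ hℓ
    simp only [Finset.mem_filter, Finset.mem_range] at hℓ
    obtain ⟨hL, hmod⟩ := hℓ
    have hdvd : (c + (ℓ : ℤ) - k) % n = 0 := by
      rw [Int.sub_emod, hmod, Int.emod_eq_of_lt hk0 hkn, sub_self, Int.zero_emod]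
    have hq : n * ((c + (ℓ : ℤ) - k) / n) = c + (ℓ : ℤ) - k := by
      have := Int.mul_ediv_add_emod (c + (ℓ : ℤ) - k) n; omega
    set qℓ : ℤ := (c + (ℓ : ℤ) - k) / n with hqℓ
    have hge : q1 ≤ qℓ := by
      by_contra hcon
      push_neg at hcon
      have h5 := mul_le_mul_of_nonneg_left (Int.add_one_le_of_lt hcon) hn.le
      have h6 : n * (qℓ + 1) = n * qℓ + n := by ring
      omega
    show (k + n * (q1 + (((qℓ - q1).toNat : ℤ))) - c).toNat = ℓ
    have htn : (((qℓ - q1).toNat : ℤ)) = qℓ - q1 := Int.toNat_of_nonneg (by omega)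
    rw [htn]
    have h7 : n * (q1 + (qℓ - q1)) = n * qℓ := by ring
    omega
  · -- right_inv
    intro r hr
    simp only [Finset.mem_range] at hr
    have hrN : (r : ℤ) < q2 - q1 := by omega
    have hA : n * (q1 + (r : ℤ)) = n * q1 + n * (r : ℤ) := by ring
    have hnr : 0 ≤ n * (r : ℤ) := mul_nonneg hn.le (Int.ofNat_nonneg r)
    have hpos : 0 ≤ k + n * (q1 + (r : ℤ)) - c := by omega
    have hcℓ : c + (((k + n * (q1 + (r : ℤ)) - c).toNat : ℤ)) = k + n * (q1 + (r : ℤ)) := by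
      omega
    show (((c + (((k + n * (q1 + (r : ℤ)) - c).toNat : ℤ)) - k) / n) - q1).toNat = r
    have h8 : (c + (((k + n * (q1 + (r : ℤ)) - c).toNat : ℤ)) - k) / n = q1 + (r : ℤ) := by
      rw [hcℓ, show k + n * (q1 + (r : ℤ)) - k = n * (q1 + (r : ℤ)) by ring]
      exact Int.mul_ediv_cancel_left _ hn.ne'
    rw [h8]
    omega
  · -- values
    intro ℓ hℓ
    simp only [Finset.mem_filter, Finset.mem_range] at hℓ
    obtain ⟨hL, hmod⟩ := hℓ
    have hdvd : (c + (ℓ : ℤ) - k) % n = 0 := by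
      rw [Int.sub_emod, hmod, Int.emod_eq_of_lt hk0 hkn, sub_self, Int.zero_emod]
    have hq : n * ((c + (ℓ : ℤ) - k) / n) = c + (ℓ : ℤ) - k := by
      have := Int.mul_ediv_add_emod (c + (ℓ : ℤ) - k) n; omega
    set qℓ : ℤ := (c + (ℓ : ℤ) - k) / n with hqℓ
    have hge : q1 ≤ qℓ := by
      by_contra hcon
      push_neg at hcon
      have h5 := mul_le_mul_of_nonneg_left (Int.add_one_le_of_lt hcon) hn.le
      have h6 : n * (qℓ + 1) = n * qℓ + n := by ring
      omega
    have htn : (((qℓ - q1).toNat : ℤ)) = qℓ - q1 := Int.toNat_of_nonneg (by omega)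
    show g (c + (ℓ : ℤ)) = g (k + n * q1 + n * (((qℓ - q1).toNat : ℤ)))
    congr 1
    rw [htn]
    have h9 : n * (qℓ - q1) = n * qℓ - n * q1 := by ring
    omega

private lemma aux1 (n k x m : ℤ) (hn : 0 < n) :
    (x - m - k + n - 1) / n = (x + n - 1 - k - m % n) / n - m / n := by
  have hm' := Int.mul_ediv_add_emod m n
  have h : x - m - k + n - 1 = (x + n - 1 - k - m % n) - n * (m / n) := by omega
  rw [h, ediv_sub_mul' n _ _ hn]

private lemma aux2 (n k x m : ℤ) (hn : 0 < n) :
    (x - m - k + n - 1) / n = -((m + k + (-x) % n) / n) - (-x) / n := by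
  have ht := Int.mul_ediv_add_emod (-x) n
  have h : x - m - k + n - 1 = (n - 1 - (m + k + (-x) % n)) - n * ((-x) / n) := by omega
  rw [h, ediv_sub_mul' n _ _ hn, ediv_nsub' n _ hn]

open Finset in

/-- Proposition F.1, Shiraishi's formula for the orbifolded Nekrasov
factor: the product defined by the mod-`n` selection rule equals the closed expression
in terms of floor functions.  Here `lam j`, `mu j` (for `j ≥ 1`) are the conjugate parts
`λ^∨_j`, `μ^∨_j` of the two partitions. -/
theorem statement13 {A : Type*} [CommRing A] (U Q K : Aˣ)
    (n k : ℕ) (hn : 1 ≤ n) (hk : k < n)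
    (lam mu : ℕ → ℕ)
    (hlam_anti : ∀ j, 1 ≤ j → lam (j + 1) ≤ lam j)
    (hmu_anti : ∀ j, 1 ≤ j → mu (j + 1) ≤ mu j)
    (hlam_fin : ∃ M, ∀ j, M ≤ j → lam j = 0)
    (hmu_fin : ∃ M, ∀ j, M ≤ j → mu j = 0) :
    (∏ᶠ j : ℕ, ∏ i ∈ Finset.Icc 1 j,
        ∏ ℓ ∈ (Finset.range (lam j - lam (j + 1))).filter
            (fun ℓ : ℕ => ((lam (j + 1) : ℤ) - (mu i : ℤ) + (ℓ : ℤ)) % (n : ℤ) = (k : ℤ)),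
          fFac U Q K ((j : ℤ) - (i : ℤ)) ((lam (j + 1) : ℤ) - (mu i : ℤ) + (ℓ : ℤ))) *
      (∏ᶠ j : ℕ, ∏ i ∈ Finset.Icc 1 j,
        ∏ ℓ ∈ (Finset.range (mu j - mu (j + 1))).filter
            (fun ℓ : ℕ => ((lam i : ℤ) - (mu j : ℤ) + (ℓ : ℤ)) % (n : ℤ) = (k : ℤ)),
          fFac U Q K ((i : ℤ) - (j : ℤ) - 1) ((lam i : ℤ) - (mu j : ℤ) + (ℓ : ℤ))) =
    (∏ᶠ j : ℕ, ∏ i ∈ Finset.Icc 1 j,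
        ∏ r ∈ Finset.range (M1 n k lam mu i j).toNat,
          fFac U Q K ((j : ℤ) - (i : ℤ)) (E1 n k lam mu i j + (n : ℤ) * (r : ℤ))) *
      (∏ᶠ j : ℕ, ∏ i ∈ Finset.Icc 1 j,
        ∏ r ∈ Finset.range (M2 n k lam mu i j).toNat,
          fFac U Q K ((i : ℤ) - (j : ℤ) - 1) (E2 n k lam mu i j + (n : ℤ) * (r : ℤ))) := by
  have hn' : (0 : ℤ) < (n : ℤ) := by exact_mod_cast hn
  have hk0 : (0 : ℤ) ≤ (k : ℤ) := Int.ofNat_nonneg k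
  have hkn : (k : ℤ) < (n : ℤ) := by exact_mod_cast hk
  congr 1
  · refine finprod_congr fun j => ?_
    refine Finset.prod_congr rfl fun i hi => ?_
    obtain ⟨hi1, hij⟩ := Finset.mem_Icc.mp hi
    have hj1 : 1 ≤ j := hi1.trans hij
    have hmono := hlam_anti j hj1
    have hLc : ((lam j - lam (j + 1) : ℕ) : ℤ) = (lam j : ℤ) - (lam (j + 1) : ℤ) := by omega
    refine (key (fun b => fFac U Q K ((j : ℤ) - (i : ℤ)) b) (n : ℤ) (k : ℤ)
      ((lam (j + 1) : ℤ) - (mu i : ℤ)) hn' hk0 hkn (lam j - lam (j + 1))).trans ?_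
    have hE : (k : ℤ) + (n : ℤ) *
        ((((lam (j + 1) : ℤ) - (mu i : ℤ)) - k + n - 1) / n) = E1 n k lam mu i j := by
      unfold E1 resM
      rw [Int.fdiv_eq_ediv_of_nonneg _ hn'.le, Int.fdiv_eq_ediv_of_nonneg _ hn'.le,
        aux1 (n : ℤ) k (lam (j + 1)) (mu i) hn']
      ring
    have hM : ((((lam (j + 1) : ℤ) - (mu i : ℤ)) + ((lam j - lam (j + 1) : ℕ) : ℤ)) - k + n - 1) / n
        - ((((lam (j + 1) : ℤ) - (mu i : ℤ))) - k + n - 1) / n = M1 n k lam mu i j := by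
      unfold M1 resM
      rw [Int.fdiv_eq_ediv_of_nonneg _ hn'.le, Int.fdiv_eq_ediv_of_nonneg _ hn'.le, hLc,
        show (lam (j + 1) : ℤ) - (mu i : ℤ) + ((lam j : ℤ) - (lam (j + 1) : ℤ)) - k + n - 1
          = (lam j : ℤ) - (mu i : ℤ) - k + n - 1 by ring,
        aux1 (n : ℤ) k (lam j) (mu i) hn', aux1 (n : ℤ) k (lam (j + 1)) (mu i) hn']
      ring
    rw [hM, hE]
  · refine finprod_congr fun j => ?_
    refine Finset.prod_congr rfl fun i hi => ?_
    obtain ⟨hi1, hij⟩ := Finset.mem_Icc.mp hi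
    have hj1 : 1 ≤ j := hi1.trans hij
    have hmono := hmu_anti j hj1
    have hLc : ((mu j - mu (j + 1) : ℕ) : ℤ) = (mu j : ℤ) - (mu (j + 1) : ℤ) := by omega
    refine (key (fun b => fFac U Q K ((i : ℤ) - (j : ℤ) - 1) b) (n : ℤ) (k : ℤ)
      ((lam i : ℤ) - (mu j : ℤ)) hn' hk0 hkn (mu j - mu (j + 1))).trans ?_
    have hE : (k : ℤ) + (n : ℤ) *
        ((((lam i : ℤ) - (mu j : ℤ)) - k + n - 1) / n) = E2 n k lam mu i j := by
      unfold E2 resM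
      rw [Int.fdiv_eq_ediv_of_nonneg _ hn'.le, Int.fdiv_eq_ediv_of_nonneg _ hn'.le,
        aux1 (n : ℤ) k (lam i) (mu j) hn']
      ring
    have hM : ((((lam i : ℤ) - (mu j : ℤ)) + ((mu j - mu (j + 1) : ℕ) : ℤ)) - k + n - 1) / n
        - ((((lam i : ℤ) - (mu j : ℤ))) - k + n - 1) / n = M2 n k lam mu i j := by
      unfold M2 resM
      rw [Int.fdiv_eq_ediv_of_nonneg _ hn'.le, Int.fdiv_eq_ediv_of_nonneg _ hn'.le, hLc,
        show (lam i : ℤ) - (mu j : ℤ) + ((mu j : ℤ) - (mu (j + 1) : ℤ)) - k + n - 1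
          = (lam i : ℤ) - (mu (j + 1) : ℤ) - k + n - 1 by ring,
        aux2 (n : ℤ) k (lam i) (mu (j + 1)) hn', aux2 (n : ℤ) k (lam i) (mu j) hn']
      ring
    rw [hM, hE]
end

section
/- Let q, t ∈ ℂ with 0 < |q| < 1 and 0 < |t| < 1, and let d₁, d₂, d₃, d₄, Q, Λ ∈ ℂ with Q, d₂, d₄ ≠ 0. For x ∈ ℂ define the convergent double infinite product (x; q,t)_∞ := ∏_{i,j ≥ 0} (1 − x q^{i} t^{j}), and assume 1 − w q^{i} t^{j} ≠ 0 for all i, j ≥ 0 for each w ∈ {tΛ, t d₁d₂d₃d₄ Λ/q, t d₂d₄ Λ/q, d₁d₃ Λ}. Define g(d₁,d₂,d₃,d₄,Λ) := (t d₂d₄ Λ/q; q,t)_∞ (d₁d₃ Λ; q,t)_∞ / ((tΛ; q,t)_∞ (t d₁d₂d₃d₄ Λ/q; q,t)_∞). Then g(d₁, d₂, d₃, d₄, Λ) · g(d₁, q/(tQd₂), d₃, qQ/d₄, d₂d₄Λ/q) = (Λ; q)_∞ · (q^{−1} d₁d₂d₃d₄ Λ; q)_∞, where (x;q)_∞ :=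 ∏_{i ≥ 0}(1 − x q^{i}). -/
/-- The double infinite product `(x;q,t)_∞ = ∏_{i,j≥0} (1 - x q^i t^j)`. -/
noncomputable def dqtPochInf (q t x : ℂ) : ℂ :=
  ∏' p : ℕ × ℕ, (1 - x * q ^ p.1 * t ^ p.2)

/-- The infinite product `(x;q)_∞ = ∏_{i≥0} (1 - x q^i)`. -/
noncomputable def qPochInf (q x : ℂ) : ℂ :=
  ∏' i : ℕ, (1 - x * q ^ i)

/-- The gauge factor
`g = (t d₂d₄Λ/q;q,t)_∞ (d₁d₃Λ;q,t)_∞ / ((tΛ;q,t)_∞ (t d₁d₂d₃d₄Λ/q;q,t)_∞)`. -/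
noncomputable def gFac (q t d₁ d₂ d₃ d₄ Λ : ℂ) : ℂ :=
  dqtPochInf q t (t * d₂ * d₄ * Λ / q) * dqtPochInf q t (d₁ * d₃ * Λ) /
    (dqtPochInf q t (t * Λ) * dqtPochInf q t (t * d₁ * d₂ * d₃ * d₄ * Λ / q))

/-! Splitting off the column `j = 0` of the double product gives
`(x;q,t)_∞ = (x;q)_∞ (tx;q,t)_∞`. The substitution `T` turns the four arguments of `g` into
`Λ`, `q⁻¹d₁d₂d₃d₄Λ`, `td₂d₄Λ/q`, `d₁d₃Λ`, so the numerator of `g` is the denominator of `T(g)`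
and `g · T(g) = (Λ;q,t)_∞ (q⁻¹d₁d₂d₃d₄Λ;q,t)_∞ / ((tΛ;q,t)_∞ (td₁d₂d₃d₄Λ/q;q,t)_∞)`, which the
column splitting reduces to the right-hand side. The cancellations are legitimate because an
absolutely convergent product of nonzero factors is nonzero. -/

lemma multipliable_one_sub {ι : Type*} {f : ι → ℂ} (hf : Summable fun i => ‖f i‖) :
    Multipliable fun i => 1 - f i := by
  simpa [sub_eq_add_neg] using
    multipliable_one_add_of_summable (f := fun i => -f i) (by simpa using hf)

lemma tprod_one_sub_ne_zero {ι : Type*} {f : ι → ℂ} (hf : ∀ i, 1 - f i ≠ 0)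
    (hs : Summable fun i => ‖f i‖) : ∏' i, (1 - f i) ≠ 0 := by
  simpa [sub_eq_add_neg] using tprod_one_add_ne_zero_of_summable (f := fun i => -f i)
    (by simpa [sub_eq_add_neg] using hf) (by simpa using hs)

def zeroOrSuccEquiv : ℕ ⊕ ℕ × ℕ ≃ ℕ × ℕ where
  toFun := Sum.elim (fun i => (i, 0)) fun p => (p.1, p.2 + 1)
  invFun p := if p.2 = 0 then .inl p.1 else .inr (p.1, p.2 - 1)
  left_inv := by rintro (i | ⟨i, j⟩) <;> simp
  right_inv := by rintro ⟨i, _ | j⟩ <;> simp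

section Pochhammer

variable {q t : ℂ}

lemma summable_norm_mul_pow_mul_pow (hq : ‖q‖ < 1) (ht : ‖t‖ < 1) (x : ℂ) :
    Summable fun p : ℕ × ℕ => ‖x * q ^ p.1 * t ^ p.2‖ := by
  simpa using summable_mul_of_summable_norm (f := fun i : ℕ => ‖x‖ * ‖q‖ ^ i)
    (g := fun j : ℕ => ‖t‖ ^ j)
    (by simpa using (summable_geometric_of_lt_one (norm_nonneg q) hq).mul_left ‖x‖)
    (by simpa using summable_geometric_of_lt_one (norm_nonneg t) ht)

lemma multipliable_one_sub_mul_pow (hq : ‖q‖ < 1) (x : ℂ) :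
    Multipliable fun i : ℕ => 1 - x * q ^ i :=
  multipliable_one_sub <| by
    simpa using (summable_geometric_of_lt_one (norm_nonneg q) hq).mul_left ‖x‖

lemma dqtPochInf_ne_zero (hq : ‖q‖ < 1) (ht : ‖t‖ < 1) {x : ℂ}
    (hx : ∀ i j : ℕ, 1 - x * q ^ i * t ^ j ≠ 0) : dqtPochInf q t x ≠ 0 :=
  tprod_one_sub_ne_zero (fun p => hx p.1 p.2) (summable_norm_mul_pow_mul_pow hq ht x)

lemma dqtPochInf_eq_qPochInf_mul (hq : ‖q‖ < 1) (ht : ‖t‖ < 1) (x : ℂ) :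
    dqtPochInf q t x = qPochInf q x * dqtPochInf q t (t * x) := by
  have hcol : (fun i => 1 - x * q ^ (zeroOrSuccEquiv (.inl i)).1 *
      t ^ (zeroOrSuccEquiv (.inl i)).2) = fun i : ℕ => 1 - x * q ^ i := by
    funext i
    simp [zeroOrSuccEquiv]
  have hrest : (fun p : ℕ × ℕ => 1 - x * q ^ (zeroOrSuccEquiv (.inr p)).1 *
      t ^ (zeroOrSuccEquiv (.inr p)).2) = fun p : ℕ × ℕ => 1 - t * x * q ^ p.1 * t ^ p.2 := by
    funext p
    simp only [zeroOrSuccEquiv, Equiv.coe_fn_mk, Sum.elim_inr]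
    ring
  rw [dqtPochInf, ← zeroOrSuccEquiv.tprod_eq, Multipliable.tprod_sum] <;>
    simp only [Function.comp_def, hcol, hrest]
  · rfl
  · exact multipliable_one_sub_mul_pow hq x
  · exact multipliable_one_sub (summable_norm_mul_pow_mul_pow hq ht (t * x))

end Pochhammer

lemma gFac_substitution {q t d₁ d₂ d₃ d₄ Q Λ : ℂ} (hq : q ≠ 0) (ht : t ≠ 0) (hQ : Q ≠ 0)
    (hd₂ : d₂ ≠ 0) (hd₄ : d₄ ≠ 0) :
    gFac q t d₁ (q / (t * Q * d₂)) d₃ (q * Q / d₄) (d₂ * d₄ * Λ / q) =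
      dqtPochInf q t Λ * dqtPochInf q t (q⁻¹ * d₁ * d₂ * d₃ * d₄ * Λ) /
        (dqtPochInf q t (t * d₂ * d₄ * Λ / q) * dqtPochInf q t (d₁ * d₃ * Λ)) := by
  unfold gFac
  congr 3 <;> field_simp

/-- Appendix H: the identity `g · T(g) = (Λ;q)_∞ (q⁻¹d₁d₂d₃d₄Λ;q)_∞`,
where `T` is the substitution `d₂ ↦ q/(tQd₂)`, `d₄ ↦ qQ/d₄`, `Λ ↦ d₂d₄Λ/q`
(with `d₁, d₃` fixed), used to recast Shakirov's equation as a coupled system. -/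
theorem statement17 (q t d₁ d₂ d₃ d₄ Q Λ : ℂ)
    (hq0 : 0 < ‖q‖) (hq1 : ‖q‖ < 1)
    (ht0 : 0 < ‖t‖) (ht1 : ‖t‖ < 1)
    (hQ : Q ≠ 0) (hd₂ : d₂ ≠ 0) (hd₄ : d₄ ≠ 0)
    (h₁ : ∀ i j : ℕ, 1 - (t * Λ) * q ^ i * t ^ j ≠ 0)
    (h₂ : ∀ i j : ℕ, 1 - (t * d₁ * d₂ * d₃ * d₄ * Λ / q) * q ^ i * t ^ j ≠ 0)
    (h₃ : ∀ i j : ℕ, 1 - (t * d₂ * d₄ * Λ / q) * q ^ i * t ^ j ≠ 0)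
    (h₄ : ∀ i j : ℕ, 1 - (d₁ * d₃ * Λ) * q ^ i * t ^ j ≠ 0) :
    gFac q t d₁ d₂ d₃ d₄ Λ *
        gFac q t d₁ (q / (t * Q * d₂)) d₃ (q * Q / d₄) (d₂ * d₄ * Λ / q) =
      qPochInf q Λ * qPochInf q (q⁻¹ * d₁ * d₂ * d₃ * d₄ * Λ) := by
  
  have hq : q ≠ 0 := norm_pos_iff.mp hq0
  have ht : t ≠ 0 := norm_pos_iff.mp ht0
  have hA := dqtPochInf_ne_zero hq1 ht1 h₃
  have hB := dqtPochInf_ne_zero hq1 ht1 h₄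
  have hC := dqtPochInf_ne_zero hq1 ht1 h₁
  have hD := dqtPochInf_ne_zero hq1 ht1 h₂
  rw [gFac_substitution hq ht hQ hd₂ hd₄, gFac, dqtPochInf_eq_qPochInf_mul hq1 ht1 Λ,
    dqtPochInf_eq_qPochInf_mul hq1 ht1 (q⁻¹ * d₁ * d₂ * d₃ * d₄ * Λ),
    show t * (q⁻¹ * d₁ * d₂ * d₃ * d₄ * Λ) = t * d₁ * d₂ * d₃ * d₄ * Λ / q by ring,
    div_mul_div_comm, div_eq_iff (mul_ne_zero (mul_ne_zero hC hD) (mul_ne_zero hA hB))]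
  ring
end
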